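/- arXiv:1601.01648 — 5 statements merged into one kernel-verified Lean document; each statement's English description precedes it below -/
import Mathlib

section
/- Let S be a transition system with a set of states, a set Init of initial states, a predicate Entry on states, and three kinds of state changes: flows, jumps, and topology updates. A run is a sequence s_0, s_1, ... where s_0 ∈ Init, each consecutive pair is a flow, a jump, or a topology update, and each flow is immediately followed by a jump or a topology update. Suppose Entry has exhaustive entry conditions: (i) every state satisfying Entry is in Init, and (ii) for every jump or topology update (s,s'), Entry holds at s'. Call a state s globally mode reachable (GMR) if there is a state s_0 satisfying Entry with a flow from s_0 to s; a state change (s,s') is GMR if s is GMR. Let Safe be a predicate on states. Then: Safe holds at every state of every run starting in a state satisfying Entry if and only if (1) every state satisfying Entry satisfies Safe, (2) Safe is preserved under all flows starting from a state satisfying Entry, (3) Safe is preserved under all GMR jumps, and (4) Safe is preserved under all GMR topology updates. -/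
/-!
Exhaustive entry conditions force every jump and topology update to land in an Entry state, and a
flow is always followed by a discrete step. Hence each state of a run from Entry is either an Entry
state or the end of a single flow out of an Entry state, so conditions (1) and (2) alone give safety.
Conversely, each condition says that the last state of a run of length at most two is Safe: a
single state, a single flow, or a flow followed by a jump or a topology update.
-/

section

variable {State : Type*} (flow jump update : State → State → Prop)

def IsRun (r : ℕ → State) (N : ℕ) : Prop :=
  (∀ n, n < N → flow (r n) (r (n+1)) ∨ jump (r n) (r (n+1)) ∨ update (r n) (r (n+1))) ∧
  (∀ n, n + 1 < N → flow (r n) (r (n+1)) →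
    jump (r (n+1)) (r (n+2)) ∨ update (r (n+1)) (r (n+2)))

variable {flow jump update}

theorem isRun_const (s : State) : IsRun flow jump update (fun _ => s) 0 :=
  ⟨by omega, by omega⟩

theorem isRun_of_flow {s s' : State} (hf : flow s s') :
    IsRun flow jump update (fun n => if n = 0 then s else s') 1 :=
  ⟨fun n hn => by interval_cases n; simp [hf], by omega⟩

theorem isRun_of_flow_of_discrete {s₀ s s' : State} (hf : flow s₀ s)
    (hd : jump s s' ∨ update s s') :
    IsRun flow jump update (fun n => if n = 0 then s₀ else if n = 1 then s else s') 2 := by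
  refine ⟨fun n hn => ?_, fun n hn _ => ?_⟩
  · interval_cases n <;> simp [hf, hd]
  · obtain rfl : n = 0 := by omega
    simpa using hd

theorem entry_or_flow_from_entry_of_isRun {Entry : State → Prop}
    (hEntryPost : ∀ s s', jump s s' ∨ update s s' → Entry s')
    {r : ℕ → State} {N : ℕ} (h₀ : Entry (r 0)) (hr : IsRun flow jump update r N) :
    ∀ n < N, Entry (r (n+1)) ∨ (Entry (r n) ∧ flow (r n) (r (n+1))) := by
  obtain ⟨hstep, halt⟩ := hr
  intro n hn
  induction n with
  | zero =>
    rcases hstep 0 hn with hf | hd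
    · exact .inr ⟨h₀, hf⟩
    · exact .inl (hEntryPost _ _ hd)
  | succ k ih =>
    rcases hstep (k+1) hn with hf | hd
    · rcases ih (by omega) with he | ⟨-, hf'⟩
      · exact .inr ⟨he, hf⟩
      · exact .inl (hEntryPost _ _ (halt k hn hf'))
    · exact .inl (hEntryPost _ _ hd)

theorem safe_of_isRun {Entry Safe : State → Prop}
    (hEntryPost : ∀ s s', jump s s' ∨ update s s' → Entry s')
    (hEntrySafe : ∀ s, Entry s → Safe s)
    (hFlowSafe : ∀ s s', Entry s → Safe s → flow s s' → Safe s')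
    {r : ℕ → State} {N : ℕ} (h₀ : Entry (r 0)) (hr : IsRun flow jump update r N) :
    ∀ n ≤ N, Safe (r n)
  | 0, _ => hEntrySafe _ h₀
  | n + 1, hn => by
    rcases entry_or_flow_from_entry_of_isRun hEntryPost h₀ hr n hn with he | ⟨he, hf⟩
    · exact hEntrySafe _ he
    · exact hFlowSafe _ _ he (hEntrySafe _ he) hf

end

theorem safety_iff_invariance_conditions_general
    {State : Type*} (Init : Set State)
    (Entry Safe : State → Prop)
    (flow jump update : State → State → Prop)
    -- exhaustive entry conditions
    (hInit : ∀ s, Entry s → s ∈ Init)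
    (hEntryPost : ∀ s s', jump s s' ∨ update s s' → Entry s') :
    (∀ (r : ℕ → State) (N : ℕ),
        r 0 ∈ Init → Entry (r 0) →
        (∀ n, n < N →
          flow (r n) (r (n+1)) ∨ jump (r n) (r (n+1)) ∨ update (r n) (r (n+1))) →
        (∀ n, n + 1 < N → flow (r n) (r (n+1)) →
          jump (r (n+1)) (r (n+2)) ∨ update (r (n+1)) (r (n+2))) →
        ∀ n, n ≤ N → Safe (r n))
    ↔ ((∀ s, Entry s → Safe s) ∧
       (∀ s s', Entry s → Safe s → flow s s' → Safe s') ∧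
       (∀ s s', (∃ s0, Entry s0 ∧ flow s0 s) → Safe s → jump s s' → Safe s') ∧
       (∀ s s', (∃ s0, Entry s0 ∧ flow s0 s) → Safe s → update s s' → Safe s')) := by
  constructor
  · intro H
    have hRunSafe : ∀ r N, Entry (r 0) → IsRun flow jump update r N → ∀ n ≤ N, Safe (r n) :=
      fun r N h₀ hr => H r N (hInit _ h₀) h₀ hr.1 hr.2
    have hDiscreteSafe : ∀ s₀ s s', Entry s₀ → flow s₀ s → jump s s' ∨ update s s' → Safe s' :=
      fun s₀ s s' h₀ hf hd => by
        simpa using hRunSafe _ 2 (by simpa) (isRun_of_flow_of_discrete hf hd) 2 le_rfl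
    refine ⟨fun s hs => hRunSafe _ 0 hs (isRun_const s) 0 le_rfl, fun s s' hs _ hf => ?_,
      fun s s' ⟨s₀, h₀, hf⟩ _ hj => hDiscreteSafe s₀ s s' h₀ hf (.inl hj),
      fun s s' ⟨s₀, h₀, hf⟩ _ hu => hDiscreteSafe s₀ s s' h₀ hf (.inr hu)⟩
    simpa using hRunSafe _ 1 (by simpa) (isRun_of_flow hf) 1 le_rfl
  · rintro ⟨hEntrySafe, hFlowSafe, -, -⟩ r N - h₀ hstep halt
    exact safe_of_isRun hEntryPost hEntrySafe hFlowSafe h₀ ⟨hstep, halt⟩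

/-- Safety with exhaustive entry conditions is equivalent to the
four invariance conditions (Theorem 3.4 of the paper), in an abstract
transition system with finite runs. -/
theorem safety_iff_invariance_conditions
    {State : Type*} (Init : Set State)
    (Entry Safe : State → Prop)
    (flow jump update : State → State → Prop)
    -- exhaustive entry conditions
    (hInit : ∀ s, Entry s → s ∈ Init)
    (hEntryPost : ∀ s s', jump s s' ∨ update s s' → Entry s')
    -- zero-length flows exist, so every Entry state is GMR
    (hflowRefl : ∀ s, flow s s) :
    (∀ (r : ℕ → State) (N : ℕ),
        r 0 ∈ Init → Entry (r 0) →
        (∀ n, n < N →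
          flow (r n) (r (n+1)) ∨ jump (r n) (r (n+1)) ∨ update (r n) (r (n+1))) →
        (∀ n, n + 1 < N → flow (r n) (r (n+1)) →
          jump (r (n+1)) (r (n+2)) ∨ update (r (n+1)) (r (n+2))) →
        ∀ n, n ≤ N → Safe (r n))
    ↔ ((∀ s, Entry s → Safe s) ∧
       (∀ s s', Entry s → Safe s → flow s s' → Safe s') ∧
       (∀ s s', (∃ s0, Entry s0 ∧ flow s0 s) → Safe s → jump s s' → Safe s') ∧
       (∀ s s', (∃ s0, Entry s0 ∧ flow s0 s) → Safe s → update s s' → Safe s')) :=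
  safety_iff_invariance_conditions_general Init Entry Safe flow jump update hInit hEntryPost
end

section
/- In the abstract transition system above, assume Entry has exhaustive entry conditions and that the reflexive (zero-length) flow (s,s) is a flow for every state s. Then every state occurring in any run starting from a state satisfying Entry is globally mode reachable (GMR), i.e., reachable by a single flow from some state satisfying Entry. -/
/-! Along a run, every state either satisfies `Entry` or is one flow step after a state that
does: a flow is never followed by another flow, and the target of a jump or update satisfies
`Entry`. Reflexive flows then make the `Entry` states themselves globally mode reachable. -/

section Run

variable {State : Type*} {Entry : State → Prop} {flow jump update : State → State → Prop}

theorem entry_or_flow_from_entry_of_run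
    (hEntryPost : ∀ s s', jump s s' ∨ update s s' → Entry s')
    {r : ℕ → State} {N : ℕ} (hEntry0 : Entry (r 0))
    (hstep : ∀ n, n < N →
      flow (r n) (r (n+1)) ∨ jump (r n) (r (n+1)) ∨ update (r n) (r (n+1)))
    (hflowThen : ∀ n, n + 1 < N → flow (r n) (r (n+1)) →
      jump (r (n+1)) (r (n+2)) ∨ update (r (n+1)) (r (n+2))) :
    ∀ n, n ≤ N → Entry (r n) ∨ ∃ m, m + 1 = n ∧ Entry (r m) ∧ flow (r m) (r n) := by
  intro n
  induction n with
  | zero => exact fun _ => Or.inl hEntry0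
  | succ k ih =>
    intro hk
    rcases hstep k hk with hflow | hjumpUpdate
    · rcases (ih (k.le_succ.trans hk)).symm with ⟨m, rfl, -, hflowPrev⟩ | hEntryk
      · exact Or.inl (hEntryPost _ _ (hflowThen m hk hflowPrev))
      · exact Or.inr ⟨k, rfl, hEntryk, hflow⟩
    · exact Or.inl (hEntryPost _ _ hjumpUpdate)

end Run

theorem run_states_are_GMR_general
    {State : Type*} (Init : Set State)
    (Entry : State → Prop)
    (flow jump update : State → State → Prop)
    (hEntryPost : ∀ s s', jump s s' ∨ update s s' → Entry s')
    (hflowRefl : ∀ s, flow s s) :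
    ∀ (r : ℕ → State) (N : ℕ),
      r 0 ∈ Init → Entry (r 0) →
      (∀ n, n < N →
        flow (r n) (r (n+1)) ∨ jump (r n) (r (n+1)) ∨ update (r n) (r (n+1))) →
      (∀ n, n + 1 < N → flow (r n) (r (n+1)) →
        jump (r (n+1)) (r (n+2)) ∨ update (r (n+1)) (r (n+2))) →
      ∀ n, n ≤ N → ∃ s0, Entry s0 ∧ flow s0 (r n) := by
  intro r N _ hEntry0 hstep hflowThen n hn
  rcases entry_or_flow_from_entry_of_run hEntryPost hEntry0 hstep hflowThen n hn with
    hEntry | ⟨m, -, hEntry, hflow⟩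
  · exact ⟨r n, hEntry, hflowRefl _⟩
  · exact ⟨r m, hEntry, hflow⟩

/-- under exhaustive entry conditions and reflexive flows, every
state occurring in a run starting from an Entry state is globally mode
reachable (GMR). -/
theorem run_states_are_GMR
    {State : Type*} (Init : Set State)
    (Entry : State → Prop)
    (flow jump update : State → State → Prop)
    (hInit : ∀ s, Entry s → s ∈ Init)
    (hEntryPost : ∀ s s', jump s s' ∨ update s s' → Entry s')
    (hflowRefl : ∀ s, flow s s) :
    ∀ (r : ℕ → State) (N : ℕ),
      r 0 ∈ Init → Entry (r 0) →
      (∀ n, n < N →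
        flow (r n) (r (n+1)) ∨ jump (r n) (r (n+1)) ∨ update (r n) (r (n+1))) →
      (∀ n, n + 1 < N → flow (r n) (r (n+1)) →
        jump (r (n+1)) (r (n+2)) ∨ update (r (n+1)) (r (n+2))) →
      ∀ n, n ≤ N → ∃ s0, Entry s0 ∧ flow s0 (r n) :=
  run_states_are_GMR_general Init Entry flow jump update hEntryPost hflowRefl
end

section
/- With the setup of the previous sequentialization lemma, if Safe is NOT preserved by a simultaneous parallel jump of components c_1,...,c_k (i.e., there exist valuations v_0, v_k with Safe(v_0), all guards holding at v_0, v_k obtained by simultaneously applying the component jumps, and ¬Safe(v_k)), then there exists an index i_0 ∈ {1,...,k} and intermediate valuations v_1,...,v_{k-1} obtained by applying the jumps sequentially, such that Safe(v_{i_0 - 1}) holds, guard_{i_0}(v_{i_0 - 1}) holds, (v_{i_0 - 1}, v_{i_0}) is a single jump of component c_{i_0}, and ¬Safe(v_{i_0}). -/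
/-!
Apply the component jumps one at a time, in the order `0, 1, …, k - 1`: the `n`-th
intermediate valuation takes the post-jump values on the components `< n` and the initial
values elsewhere. Since jumps and guards are local, step `i` is a jump of component `i`
whose guard holds because component `i` is still untouched. The sequence starts safe and ends
unsafe, so some step leaves the safe set.
-/

theorem Nat.exists_lt_and_not_succ_of_not {p : ℕ → Prop} (h0 : p 0) {n : ℕ} (hn : ¬ p n) :
    ∃ m < n, p m ∧ ¬ p (m + 1) := by
  induction n with
  | zero => exact absurd h0 hn
  | succ n ih =>
    by_cases hpn : p n
    · exact ⟨n, Nat.lt_add_one n, hpn, hn⟩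
    · obtain ⟨m, hm, hpm⟩ := ih hpn
      exact ⟨m, hm.trans (Nat.lt_add_one n), hpm⟩

section SequentialJump

variable {V β : Type*} {k : ℕ} (comp : V → Fin k) (v0 : V → β) (w : Fin k → V → β)

def sequentialJump (n : ℕ) (x : V) : β :=
  if (comp x).val < n then w (comp x) x else v0 x

@[simp]
theorem sequentialJump_zero : sequentialJump comp v0 w 0 = v0 := by
  funext x
  simp [sequentialJump]

theorem sequentialJump_card : sequentialJump comp v0 w k = fun x => w (comp x) x := by
  funext x
  simp [sequentialJump, (comp x).isLt]

variable {comp} {x : V} {i : Fin k}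

theorem sequentialJump_of_comp_eq (hx : comp x = i) : sequentialJump comp v0 w i x = v0 x := by
  simp [sequentialJump, hx]

theorem sequentialJump_succ_of_comp_eq (hx : comp x = i) :
    sequentialJump comp v0 w (i + 1) x = w i x := by
  simp [sequentialJump, hx]

theorem sequentialJump_succ_of_comp_ne (hx : comp x ≠ i) :
    sequentialJump comp v0 w (i + 1) x = sequentialJump comp v0 w i x := by
  have hne : (comp x).val ≠ i.val := fun h => hx (Fin.ext h)
  simp only [sequentialJump]
  split_ifs <;> first | rfl | omega

end SequentialJump

/-- counterexample extraction.  If a simultaneous parallel jump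
violates Safe, then along the sequentialization of the jump there is a single
component jump violating Safe. -/
theorem parallel_violation_yields_single_violation
    {V : Type*} {k : ℕ} (comp : V → Fin k)
    (guard : Fin k → (V → ℝ) → Prop)
    (jumpR : Fin k → (V → ℝ) → (V → ℝ) → Prop)
    (Safe : (V → ℝ) → Prop)
    (hguard_local : ∀ (i : Fin k) (v v' : V → ℝ),
      (∀ x, comp x = i → v x = v' x) → (guard i v ↔ guard i v'))
    (hjump_local : ∀ (i : Fin k) (v v' u u' : V → ℝ),
      (∀ x, comp x = i → v x = u x) → (∀ x, comp x = i → v' x = u' x) →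
      jumpR i v v' → jumpR i u u')
    (v0 vk : V → ℝ)
    (hSafe0 : Safe v0)
    (hguards : ∀ i, guard i v0)
    -- simultaneous parallel jump from v0 to vk
    (w : Fin k → (V → ℝ))
    (hw : ∀ i, jumpR i v0 (w i) ∧ ∀ x, comp x ≠ i → w i x = v0 x)
    (hvk : ∀ x, vk x = w (comp x) x)
    (hUnsafe : ¬ Safe vk) :
    ∃ v : ℕ → (V → ℝ),
      v 0 = v0 ∧ v k = vk ∧
      (∀ i : Fin k,
        jumpR i (v i.val) (v (i.val + 1)) ∧
        ∀ x, comp x ≠ i → v (i.val + 1) x = v i.val x) ∧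
      ∃ i0 : Fin k,
        Safe (v i0.val) ∧ guard i0 (v i0.val) ∧
        jumpR i0 (v i0.val) (v (i0.val + 1)) ∧ ¬ Safe (v (i0.val + 1)) := by
  set v := sequentialJump comp v0 w
  have hv_card : v k = vk := (sequentialJump_card comp v0 w).trans (funext hvk).symm
  have hsteps : ∀ i : Fin k,
      jumpR i (v i) (v (i + 1)) ∧ ∀ x, comp x ≠ i → v (i + 1) x = v i x := fun i =>
    ⟨hjump_local i v0 (w i) _ _
      (fun _ hx => (sequentialJump_of_comp_eq v0 w hx).symm)
      (fun _ hx => (sequentialJump_succ_of_comp_eq v0 w hx).symm) (hw i).1,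
     fun _ hx => sequentialJump_succ_of_comp_ne v0 w hx⟩
  obtain ⟨n, hnk, hSafe_n, hUnsafe_n⟩ :=
    Nat.exists_lt_and_not_succ_of_not (p := fun n => Safe (v n))
      (by simpa [v] using hSafe0) (hv_card ▸ hUnsafe)
  have hguard_n : guard ⟨n, hnk⟩ (v n) :=
    (hguard_local _ _ v0 fun _ hx => sequentialJump_of_comp_eq v0 w hx).mpr (hguards _)
  exact ⟨v, sequentialJump_zero comp v0 w, hv_card, hsteps,
    ⟨n, hnk⟩, hSafe_n, hguard_n, (hsteps ⟨n, hnk⟩).1, hUnsafe_n⟩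
end

section
/- Consider the car model on two lanes: positions pos : I → ℝ and lanes lane : I → ℝ of cars indexed by a set I with a distinguished element nil, and a pointer front : I → I. Assume the entry condition: for all i ≠ nil with front(i) ≠ nil, pos(front(i)) > pos(i) + d' and lane(front(i)) = lane(i), and for all k ≠ nil with k ≠ i, if pos(k) ≥ pos(i) and lane(k) = lane(i) then pos(k) ≥ pos(front(i)); moreover for all i ≠ nil with front(i) = nil, every k ≠ nil with k ≠ i and pos(k) ≥ pos(i) has lane(k) ≠ lane(i). If d' ≥ d_s, then the global safety property holds: for all i ≠ nil, j ≠ nil with i ≠ j, if lane(i) = lane(j) and pos(i) > pos(j), then pos(i) - pos(j) ≥ d_s. -/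
/-- the entry condition (correct front sensor with gap d') implies
the global safety property with safety distance d_s, provided d' ≥ d_s. -/
theorem entry_implies_global_safety
    {I : Type*} (nil : I) (pos lane : I → ℝ) (front : I → I)
    (d' ds : ℝ)
    (h1 : ∀ i, i ≠ nil → front i ≠ nil →
      pos (front i) > pos i + d' ∧ lane (front i) = lane i ∧
      ∀ k, k ≠ nil → k ≠ i → pos k ≥ pos i → lane k = lane i →
        pos k ≥ pos (front i))
    (h2 : ∀ i, i ≠ nil → front i = nil →
      ∀ k, k ≠ nil → k ≠ i → pos k ≥ pos i → lane k ≠ lane i)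
    (hd : d' ≥ ds) :
    ∀ i j, i ≠ nil → j ≠ nil → i ≠ j → lane i = lane j → pos i > pos j →
      pos i - pos j ≥ ds := by
  intro i j hi hj hij hlane hpos
  by_cases hfront : front j = nil
  · exact absurd hlane (h2 j hj hfront i hi hij hpos.le)
  · obtain ⟨hgap, -, hnearest⟩ := h1 j hj hfront
    have hbehind : pos i ≥ pos (front j) := hnearest i hi hij hpos.le hlane
    linarith
end

section
/- In the abstract transition system with exhaustive entry conditions (Definition: (i) Entry(s) → s ∈ Init; (ii) every jump or topology update (s,s') satisfies Entry(s')), suppose additionally that GMR-exhaustive entry conditions hold: condition (ii) is only required for GMR jumps and GMR topology updates, where a state change (s,s') is GMR if s is reachable by a flow from some state satisfying Entry, and the identity flow (s,s) exists for all s. Then the same four conditions as in the main theorem — (1) all Entry states satisfy Safe, (2) Safe is preserved by flows from Entry states, (3) Safe is preserved by GMR jumps, (4) Safe is preserved by GMR topology updates — are equivalent to: Safe holds at every state of every run starting in a state satisfying Entry. -/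
/-!
Conditions (1)–(4) say exactly that `Safe` holds at Entry states and is preserved along every
flow out of an Entry state and every jump or update out of a GMR state. Along a run starting in
an Entry state every step is of one of these two kinds: a state of the run is either an Entry
state or the target of a flow out of one, and in the second case the run must continue with a
jump or update, whose target is again an Entry state by the GMR-exhaustive entry conditions
(identity flows make every Entry state GMR). Conversely, each of the four conditions is the
safety of a run with at most three states.
-/

namespace TransitionSystem

variable {State : Type*} (Init : Set State) (Entry Safe : State → Prop)
  (flow jump update : State → State → Prop)

structure IsRun (r : ℕ → State) (N : ℕ) : Prop where
  init : r 0 ∈ Init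
  step : ∀ n < N, flow (r n) (r (n + 1)) ∨ jump (r n) (r (n + 1)) ∨ update (r n) (r (n + 1))
  flow_then_jump_or_update : ∀ n, n + 1 < N → flow (r n) (r (n + 1)) →
    jump (r (n + 1)) (r (n + 2)) ∨ update (r (n + 1)) (r (n + 2))

def IsGMR (s : State) : Prop :=
  ∃ s₀, Entry s₀ ∧ flow s₀ s

/-- The state changes along which conditions (2)–(4) require `Safe` to be preserved. -/
def IsCheckedStep (s s' : State) : Prop :=
  (Entry s ∧ flow s s') ∨ (IsGMR Entry flow s ∧ (jump s s' ∨ update s s'))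

def RunsSafe : Prop :=
  ∀ r N, IsRun Init flow jump update r N → Entry (r 0) → ∀ n ≤ N, Safe (r n)

def InvarianceConditions : Prop :=
  (∀ s, Entry s → Safe s) ∧
  (∀ s s', Entry s → Safe s → flow s s' → Safe s') ∧
  (∀ s s', IsGMR Entry flow s → Safe s → jump s s' → Safe s') ∧
  (∀ s s', IsGMR Entry flow s → Safe s → update s s' → Safe s')

variable {Init Entry Safe flow jump update}

section ShortRuns

variable {r : ℕ → State}

theorem isRun_zero (h₀ : r 0 ∈ Init) : IsRun Init flow jump update r 0 :=
  ⟨h₀, by omega, by omega⟩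

theorem isRun_one (h₀ : r 0 ∈ Init) (h₀₁ : flow (r 0) (r 1)) :
    IsRun Init flow jump update r 1 where
  init := h₀
  step
    | 0, _ => Or.inl h₀₁
    | _ + 1, h => by omega
  flow_then_jump_or_update _ h := by omega

theorem isRun_two (h₀ : r 0 ∈ Init) (h₀₁ : flow (r 0) (r 1))
    (h₁₂ : jump (r 1) (r 2) ∨ update (r 1) (r 2)) : IsRun Init flow jump update r 2 where
  init := h₀
  step
    | 0, _ => Or.inl h₀₁
    | 1, _ => Or.inr h₁₂
    | _ + 2, h => by omega
  flow_then_jump_or_update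
    | 0, _, _ => h₁₂
    | _ + 1, h, _ => by omega

end ShortRuns

section RunsSafe

variable (hInit : ∀ s, Entry s → s ∈ Init) (h : RunsSafe Init Entry Safe flow jump update)
include hInit h

theorem RunsSafe.safe_of_entry {s : State} (hs : Entry s) : Safe s :=
  h (fun _ ↦ s) 0 (isRun_zero (hInit s hs)) hs 0 le_rfl

theorem RunsSafe.safe_of_flow {s s' : State} (hs : Entry s) (hf : flow s s') : Safe s' :=
  h (fun | 0 => s | _ => s') 1 (isRun_one (hInit s hs) hf) hs 1 le_rfl

theorem RunsSafe.safe_of_flow_of_jump_or_update {s₀ s s' : State} (hs₀ : Entry s₀)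
    (hf : flow s₀ s) (hs : jump s s' ∨ update s s') : Safe s' :=
  h (fun | 0 => s₀ | 1 => s | _ => s') 2 (isRun_two (hInit s₀ hs₀) hf hs) hs₀ 2 le_rfl

theorem RunsSafe.invarianceConditions : InvarianceConditions Entry Safe flow jump update :=
  ⟨fun _ hs ↦ h.safe_of_entry hInit hs,
    fun _ _ hs _ hf ↦ h.safe_of_flow hInit hs hf,
    fun _ _ ⟨_, hs₀, hf⟩ _ hj ↦ h.safe_of_flow_of_jump_or_update hInit hs₀ hf (.inl hj),
    fun _ _ ⟨_, hs₀, hf⟩ _ hu ↦ h.safe_of_flow_of_jump_or_update hInit hs₀ hf (.inr hu)⟩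

end RunsSafe

section CheckedSteps

variable (hEntryPost : ∀ s s', IsGMR Entry flow s → (jump s s' ∨ update s s') → Entry s')
  (hflowRefl : ∀ s, flow s s)

include hflowRefl in
theorem isCheckedStep_of_entry {s s' : State} (hs : Entry s)
    (hstep : flow s s' ∨ jump s s' ∨ update s s') :
    IsCheckedStep Entry flow jump update s s' := by
  rcases hstep with hf | hju
  · exact .inl ⟨hs, hf⟩
  · exact .inr ⟨⟨s, hs, hflowRefl s⟩, hju⟩

include hEntryPost hflowRefl in
theorem IsRun.isCheckedStep {r : ℕ → State} {N : ℕ} (hr : IsRun Init flow jump update r N)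
    (h₀ : Entry (r 0)) : ∀ n < N, IsCheckedStep Entry flow jump update (r n) (r (n + 1)) := by
  intro n
  induction n with
  | zero => exact fun hN ↦ isCheckedStep_of_entry hflowRefl h₀ (hr.step 0 hN)
  | succ n ih =>
    intro hN
    rcases ih (by omega) with ⟨hentry, hf⟩ | ⟨hgmr, hju⟩
    · exact .inr ⟨⟨r n, hentry, hf⟩, hr.flow_then_jump_or_update n hN hf⟩
    · exact isCheckedStep_of_entry hflowRefl (hEntryPost _ _ hgmr hju) (hr.step (n + 1) hN)

theorem InvarianceConditions.safe_of_isCheckedStep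
    (hcond : InvarianceConditions Entry Safe flow jump update) {s s' : State}
    (hsafe : Safe s) (hstep : IsCheckedStep Entry flow jump update s s') : Safe s' := by
  obtain ⟨-, hflow, hjump, hupdate⟩ := hcond
  rcases hstep with ⟨hentry, hf⟩ | ⟨hgmr, hj | hu⟩
  · exact hflow _ _ hentry hsafe hf
  · exact hjump _ _ hgmr hsafe hj
  · exact hupdate _ _ hgmr hsafe hu

include hEntryPost hflowRefl in
theorem InvarianceConditions.runsSafe (hcond : InvarianceConditions Entry Safe flow jump update) :
    RunsSafe Init Entry Safe flow jump update := by
  intro r N hr h₀ n hn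
  induction n with
  | zero => exact hcond.1 _ h₀
  | succ n ih =>
    exact hcond.safe_of_isCheckedStep (ih (by omega))
      (hr.isCheckedStep hEntryPost hflowRefl h₀ n hn)

end CheckedSteps

end TransitionSystem

open TransitionSystem in
/-- Theorem 3.8 of the paper — with GMR-exhaustive entry
conditions the four invariance conditions are still equivalent to safety of
all runs starting in an Entry state. -/
theorem safety_iff_invariance_conditions_GMR
    {State : Type*} (Init : Set State)
    (Entry Safe : State → Prop)
    (flow jump update : State → State → Prop)
    -- GMR-exhaustive entry conditions
    (hInit : ∀ s, Entry s → s ∈ Init)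
    (hEntryPostGMR : ∀ s s', (∃ s0, Entry s0 ∧ flow s0 s) →
      (jump s s' ∨ update s s') → Entry s')
    -- zero-length flows exist
    (hflowRefl : ∀ s, flow s s) :
    (∀ (r : ℕ → State) (N : ℕ),
        r 0 ∈ Init → Entry (r 0) →
        (∀ n, n < N →
          flow (r n) (r (n+1)) ∨ jump (r n) (r (n+1)) ∨ update (r n) (r (n+1))) →
        (∀ n, n + 1 < N → flow (r n) (r (n+1)) →
          jump (r (n+1)) (r (n+2)) ∨ update (r (n+1)) (r (n+2))) →
        ∀ n, n ≤ N → Safe (r n))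
    ↔ ((∀ s, Entry s → Safe s) ∧
       (∀ s s', Entry s → Safe s → flow s s' → Safe s') ∧
       (∀ s s', (∃ s0, Entry s0 ∧ flow s0 s) → Safe s → jump s s' → Safe s') ∧
       (∀ s s', (∃ s0, Entry s0 ∧ flow s0 s) → Safe s → update s s' → Safe s')) := by
  constructor
  · intro hruns
    have hsafe : RunsSafe Init Entry Safe flow jump update := fun r N hr h₀ ↦
      hruns r N hr.init h₀ hr.step hr.flow_then_jump_or_update
    exact hsafe.invarianceConditions hInit
  · intro hcond r N h₀ hentry hstep hflow
    exact InvarianceConditions.runsSafe hEntryPostGMR hflowRefl hcond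
      r N ⟨h₀, hstep, hflow⟩ hentry
end
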